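/- Let ω be a semi-selforthogonal subcategory of a triangulated category T and let G be an ω-Gorenstein object. Then there exists a triangle G → M₀ →g G₁ → G[1] with M₀ ∈ add ω, G₁ an ω-Gorenstein object, and g a right add ω-approximation of G₁ (i.e., Hom(M', g) is surjective for every M' ∈ add ω). -/

import Mathlib

open CategoryTheory Category Limits Pretriangulated

universe v u

namespace RelSing

variable {C : Type u} [Category.{v} C] [Preadditive C] [HasZeroObject C]
  [HasShift C ℤ] [∀ n : ℤ, (shiftFunctor C n).Additive] [Pretriangulated C]

/-- `ω` is semi-selforthogonal (presilting): `Hom(M, M'[i]) = 0` for `M, M' ∈ ω`, `i > 0`. -/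
def SemiSelfOrth (ω : Set C) : Prop :=
  ∀ M ∈ ω, ∀ M' ∈ ω, ∀ i : ℤ, 0 < i → ∀ f : M ⟶ M'⟦i⟧, f = 0

/-- `add ω`: closure of `ω` under zero objects, finite direct sums (expressed via
biproduct data) and direct summands (retracts). -/
inductive AddCat (ω : Set C) : C → Prop
  | of {X : C} (hX : X ∈ ω) : AddCat ω X
  | zero {X : C} (hX : IsZero X) : AddCat ω X
  | sum {X Y Z : C} (i₁ : X ⟶ Z) (i₂ : Y ⟶ Z) (p₁ : Z ⟶ X) (p₂ : Z ⟶ Y)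
      (h₁ : i₁ ≫ p₁ = 𝟙 X) (h₂ : i₂ ≫ p₂ = 𝟙 Y) (h₁₂ : i₁ ≫ p₂ = 0) (h₂₁ : i₂ ≫ p₁ = 0)
      (hZ : p₁ ≫ i₁ + p₂ ≫ i₂ = 𝟙 Z) (hX : AddCat ω X) (hY : AddCat ω Y) : AddCat ω Z
  | retract {X Y : C} (i : X ⟶ Y) (r : Y ⟶ X) (hir : i ≫ r = 𝟙 X) (hY : AddCat ω Y) :
      AddCat ω X

/-- The left orthogonal `⊥ω`. -/
def leftPerp (ω : Set C) : Set C :=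
  {N | ∀ M ∈ ω, ∀ i : ℤ, 0 < i → ∀ f : N ⟶ M⟦i⟧, f = 0}

/-- The right orthogonal `ω⊥`. -/
def rightPerp (ω : Set C) : Set C :=
  {N | ∀ M ∈ ω, ∀ i : ℤ, 0 < i → ∀ f : M ⟶ N⟦i⟧, f = 0}

/-- The Auslander class `X_ω`: objects `T₀` with triangles `T_i → M_i → T_{i+1} → T_i[1]`
for all `i ≥ 0`, `M_i ∈ add ω`, `T_i ∈ ⊥ω`. -/
def Auslander (ω : Set C) : Set C :=
  {X | ∃ (T : ℕ → C) (M : ℕ → C) (f : ∀ i, T i ⟶ M i) (g : ∀ i, M i ⟶ T (i + 1))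
      (h : ∀ i, T (i + 1) ⟶ (T i)⟦(1 : ℤ)⟧),
    T 0 = X ∧ (∀ i, Triangle.mk (f i) (g i) (h i) ∈ distTriang C) ∧
      (∀ i, AddCat ω (M i)) ∧ (∀ i, T i ∈ leftPerp ω)}

/-- The co-Auslander class `ωX`: objects `T₀` with triangles `T_{i+1} → M_i → T_i → T_{i+1}[1]`
for all `i ≥ 0`, `M_i ∈ add ω`, `T_i ∈ ω⊥`. -/
def coAuslander (ω : Set C) : Set C :=
  {X | ∃ (T : ℕ → C) (M : ℕ → C) (f : ∀ i, T (i + 1) ⟶ M i) (g : ∀ i, M i ⟶ T i)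
      (h : ∀ i, T i ⟶ (T (i + 1))⟦(1 : ℤ)⟧),
    T 0 = X ∧ (∀ i, Triangle.mk (f i) (g i) (h i) ∈ distTriang C) ∧
      (∀ i, AddCat ω (M i)) ∧ (∀ i, T i ∈ rightPerp ω)}

/-- `check S` (`S̬`): objects `X₀` with triangles `X_i → C_i → X_{i+1} → X_i[1]` for
`0 ≤ i ≤ r`, `C_i ∈ S`, `X_{r+1} = 0`. -/
def CheckClass (S : Set C) : Set C :=
  {X | ∃ (r : ℕ) (T : ℕ → C) (M : ℕ → C) (f : ∀ i, T i ⟶ M i) (g : ∀ i, M i ⟶ T (i + 1))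
      (h : ∀ i, T (i + 1) ⟶ (T i)⟦(1 : ℤ)⟧),
    T 0 = X ∧ IsZero (T (r + 1)) ∧ (∀ i ≤ r, Triangle.mk (f i) (g i) (h i) ∈ distTriang C) ∧
      (∀ i ≤ r, M i ∈ S)}

/-- `hat S` (`Ŝ`): objects `X₀` with triangles `X_{i+1} → C_i → X_i → X_{i+1}[1]` for
`0 ≤ i ≤ r`, `C_i ∈ S`, `X_{r+1} = 0`. -/
def HatClass (S : Set C) : Set C :=
  {X | ∃ (r : ℕ) (T : ℕ → C) (M : ℕ → C) (f : ∀ i, T (i + 1) ⟶ M i) (g : ∀ i, M i ⟶ T i)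
      (h : ∀ i, T i ⟶ (T (i + 1))⟦(1 : ℤ)⟧),
    T 0 = X ∧ IsZero (T (r + 1)) ∧ (∀ i ≤ r, Triangle.mk (f i) (g i) (h i) ∈ distTriang C) ∧
      (∀ i ≤ r, M i ∈ S)}

/-- A (strictly full) triangulated subcategory, as a predicate on sets of objects. -/
structure IsTriangulatedSub (S : Set C) : Prop where
  zero : ∀ X : C, IsZero X → X ∈ S
  iso : ∀ {X Y : C}, (X ≅ Y) → X ∈ S → Y ∈ S
  shift : ∀ X ∈ S, ∀ n : ℤ, X⟦n⟧ ∈ S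
  ext₂ : ∀ T ∈ distTriang C, T.obj₁ ∈ S → T.obj₃ ∈ S → T.obj₂ ∈ S

/-- `⟨S⟩`: the smallest triangulated subcategory containing `S`. -/
def genTriang (S : Set C) : Set C :=
  ⋂₀ {U : Set C | S ⊆ U ∧ IsTriangulatedSub U}

/-- `S[+] = {X | X ≅ C[n], C ∈ S, n ≥ 0}`. -/
def plusClass (S : Set C) : Set C :=
  {X | ∃ Y ∈ S, ∃ n : ℕ, Nonempty (X ≅ Y⟦(n : ℤ)⟧)}

/-- `S[-] = {X | X ≅ C[n], C ∈ S, n ≤ 0}`. -/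
def minusClass (S : Set C) : Set C :=
  {X | ∃ Y ∈ S, ∃ n : ℕ, Nonempty (X ≅ Y⟦(-(n : ℤ))⟧)}

/-- `f` factors through an object of `add ω`. -/
def FactorsThruAdd (ω : Set C) {X Y : C} (f : X ⟶ Y) : Prop :=
  ∃ (M : C) (g : X ⟶ M) (h : M ⟶ Y), AddCat ω M ∧ g ≫ h = f

/-- The `ω`-Gorenstein objects: `G_ω = ωX ∩ X_ω`. -/
def Gor (ω : Set C) : Set C := coAuslander ω ∩ Auslander ω


end RelSing

/-!
The first triangle `G → M₀ → G₁ → G⟦1⟧` of the Auslander resolution of `G` works. As a member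
of `ωX`, `G` lies in `ω⊥`, and so does `M₀ ∈ add ω` by semi-selforthogonality; hence so does the
cone `G₁`, and prepending the triangle to the co-resolution of `G` puts `G₁` in `ωX`. Finally,
`Hom(M', G⟦1⟧) = 0` for `M' ∈ add ω` makes `g` a right `add ω`-approximation.
-/

namespace RelSing

section Preadditive

variable {C : Type u} [Category.{v} C] [Preadditive C] {ω : Set C}

lemma AddCat.hom_eq_zero {N Y : C} (hN : AddCat ω N) (h : ∀ M ∈ ω, ∀ f : M ⟶ Y, f = 0)
    (f : N ⟶ Y) : f = 0 := by
  induction hN with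
  | of hX => exact h _ hX f
  | zero hX => exact hX.eq_of_src f 0
  | sum i₁ i₂ p₁ p₂ _ _ _ _ hZ _ _ ihX ihY =>
    rw [← id_comp f, ← hZ, Preadditive.add_comp, assoc, assoc, ihX (i₁ ≫ f), ihY (i₂ ≫ f),
      comp_zero, comp_zero, add_zero]
  | retract i r hir _ ihY => rw [← id_comp f, ← hir, assoc, ihY (r ≫ f), comp_zero]

variable [HasShift C ℤ]

lemma rightPerp.hom_eq_zero_of_addCat {Y N : C} (hY : Y ∈ rightPerp ω) (hN : AddCat ω N)
    {i : ℤ} (hi : 0 < i) (f : N ⟶ Y⟦i⟧) : f = 0 :=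
  hN.hom_eq_zero (fun M hM => hY M hM i hi) f

variable [∀ n : ℤ, (shiftFunctor C n).Additive]

lemma AddCat.hom_shift_eq_zero {X N : C} {i : ℤ} (hN : AddCat ω N)
    (h : ∀ M ∈ ω, ∀ f : X ⟶ M⟦i⟧, f = 0) (f : X ⟶ N⟦i⟧) : f = 0 := by
  induction hN with
  | of hX => exact h _ hX f
  | zero hX => exact ((shiftFunctor C i).map_isZero hX).eq_of_tgt f 0
  | sum i₁ i₂ p₁ p₂ _ _ _ _ hZ _ _ ihX ihY =>
    rw [← comp_id f, ← (shiftFunctor C i).map_id, ← hZ, Functor.map_add, Preadditive.comp_add,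
      Functor.map_comp, Functor.map_comp, ← assoc, ← assoc, ihX (f ≫ p₁⟦i⟧'),
      ihY (f ≫ p₂⟦i⟧'), zero_comp, zero_comp, add_zero]
  | retract j r hir _ ihY =>
    rw [← comp_id f, ← (shiftFunctor C i).map_id, ← hir, Functor.map_comp, ← assoc,
      ihY (f ≫ j⟦i⟧'), zero_comp]

lemma AddCat.mem_rightPerp {N : C} (hω : SemiSelfOrth ω) (hN : AddCat ω N) :
    N ∈ rightPerp ω :=
  fun M hM i hi => hN.hom_shift_eq_zero (fun M' hM' => hω M hM M' hM' i hi)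

end Preadditive

variable {C : Type u} [Category.{v} C] [Preadditive C] [HasZeroObject C]
  [HasShift C ℤ] [∀ n : ℤ, (shiftFunctor C n).Additive] [Pretriangulated C] {ω : Set C}

lemma obj₃_mem_rightPerp (T : Triangle C) (hT : T ∈ distTriang C)
    (h₁ : T.obj₁ ∈ rightPerp ω) (h₂ : T.obj₂ ∈ rightPerp ω) : T.obj₃ ∈ rightPerp ω := by
  intro M hM i hi
  -- `φ ≫ Tᵢ.mor₃` lands in `T.obj₁⟦i⟧⟦1⟧ ≅ T.obj₁⟦i + 1⟧`, so it vanishes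
  -- and `φ` factors through `T.obj₂⟦i⟧`.
  let Tᵢ := (CategoryTheory.shiftFunctor (Triangle C) i).obj T
  change ∀ φ : M ⟶ Tᵢ.obj₃, φ = 0
  intro φ
  have hφ : φ ≫ Tᵢ.mor₃ = 0 :=
    (cancel_mono ((shiftFunctorAdd C i 1).app T.obj₁).inv).1
      ((h₁ M hM (i + 1) (by omega) _).trans zero_comp.symm)
  obtain ⟨l, rfl⟩ := Triangle.coyoneda_exact₃ Tᵢ (Triangle.shift_distinguished T hT i) φ hφ
  obtain rfl : l = 0 := h₂ M hM i hi l
  exact zero_comp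

lemma exists_lift_of_distTriang {X N Y M : C} {a : X ⟶ N} {g : N ⟶ Y}
    {h : Y ⟶ X⟦(1 : ℤ)⟧} (hT : Triangle.mk a g h ∈ distTriang C) (hX : X ∈ rightPerp ω)
    (hM : AddCat ω M) (k : M ⟶ Y) : ∃ l : M ⟶ N, l ≫ g = k := by
  obtain ⟨l, hl⟩ :=
    Triangle.coyoneda_exact₃ _ hT k (rightPerp.hom_eq_zero_of_addCat hX hM one_pos _)
  exact ⟨l, hl.symm⟩

lemma coAuslander_subset_rightPerp : coAuslander ω ⊆ rightPerp ω := by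
  rintro _ ⟨T, -, -, -, -, rfl, -, -, hT⟩
  exact hT 0

lemma mem_coAuslander_of_distTriang {X N Y : C} {a : X ⟶ N} {g : N ⟶ Y}
    {h : Y ⟶ X⟦(1 : ℤ)⟧} (hT : Triangle.mk a g h ∈ distTriang C) (hX : X ∈ coAuslander ω)
    (hN : AddCat ω N) (hY : Y ∈ rightPerp ω) : Y ∈ coAuslander ω := by
  obtain ⟨S, M, f', g', h', rfl, hS, hM, hperp⟩ := hX
  refine ⟨Nat.rec Y fun k _ => S k, Nat.rec N fun k _ => M k, Nat.rec a fun k _ => f' k,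
    Nat.rec g fun k _ => g' k, Nat.rec h fun k _ => h' k, rfl, ?_, ?_, ?_⟩ <;>
  rintro (_ | k)
  exacts [hT, hS k, hN, hM k, hY, hperp k]

lemma exists_distTriang_of_mem_Auslander {X : C} (hX : X ∈ Auslander ω) :
    ∃ (N Y : C) (a : X ⟶ N) (g : N ⟶ Y) (h : Y ⟶ X⟦(1 : ℤ)⟧),
      Triangle.mk a g h ∈ distTriang C ∧ AddCat ω N ∧ Y ∈ Auslander ω := by
  obtain ⟨T, M, f, g, h, rfl, hT, hM, hperp⟩ := hX
  exact ⟨M 0, T 1, f 0, g 0, h 0, hT 0, hM 0,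
    ⟨fun n => T (n + 1), fun n => M (n + 1), fun n => f (n + 1), fun n => g (n + 1),
      fun n => h (n + 1), rfl, fun i => hT (i + 1), fun i => hM (i + 1),
      fun i => hperp (i + 1)⟩⟩

end RelSing

open RelSing

variable {C : Type u} [Category.{v} C] [Preadditive C] [HasZeroObject C]
  [HasShift C ℤ] [∀ n : ℤ, (shiftFunctor C n).Additive] [Pretriangulated C]

/-- For a semi-selforthogonal `ω` and an `ω`-Gorenstein object `G`, there is a
triangle `G → M₀ →g G₁ → G[1]` with `M₀ ∈ add ω`, `G₁` `ω`-Gorenstein and `g` a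
right `add ω`-approximation of `G₁`. -/
theorem stmt9 (ω : Set C) (hω : SemiSelfOrth ω) {G : C} (hG : G ∈ Gor ω) :
    ∃ (M₀ G₁ : C) (a : G ⟶ M₀) (g : M₀ ⟶ G₁) (h : G₁ ⟶ G⟦(1 : ℤ)⟧),
      Triangle.mk a g h ∈ (distTriang C) ∧ AddCat ω M₀ ∧ G₁ ∈ Gor ω ∧
      (∀ M' : C, AddCat ω M' → ∀ k : M' ⟶ G₁, ∃ l : M' ⟶ M₀, l ≫ g = k) := by
  obtain ⟨hGco, hGA⟩ := hG
  obtain ⟨M₀, G₁, a, g, h, hT, hM₀, hG₁A⟩ := exists_distTriang_of_mem_Auslander hGA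
  have hG : G ∈ rightPerp ω := coAuslander_subset_rightPerp hGco
  have hG₁ : G₁ ∈ rightPerp ω := obj₃_mem_rightPerp _ hT hG (hM₀.mem_rightPerp hω)
  exact ⟨M₀, G₁, a, g, h, hT, hM₀, ⟨mem_coAuslander_of_distTriang hT hGco hM₀ hG₁, hG₁A⟩,
    fun _ hM' k => exists_lift_of_distTriang hT hG hM' k⟩
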